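/- For every β ∈ (0,1) there exists n₀ ∈ ℕ such that for all n ≥ n₀ the following holds. Suppose a one-message shuffled protocol P = (R, A) on data universe 𝒳 with message space 𝒴 is (ε_S, δ_S)-differentially private in the shuffled model with ε_S ≤ 1 and δ_S < n^{−8}, and is (α,β)-accurate for a function f : 𝒳^n → 𝒵 with respect to a distance function d : 𝒵 × 𝒵 → ℝ. Then there exists a local protocol P_L = (R', A') on 𝒳 that is (8(ε_S + ln n), 0)-differentially private in the local model and is (α, 4β)-accurate for f with respect to d. -/

import Mathlib

/-!
Comparing the datasets `(x, x', …, x')` and `(x', …, x')` on the event "some message lies in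
`T`", shuffled `(ε, δ)`-privacy gives `R x (T) ≤ n e^ε · R x' (T) + δ` for any two inputs. So
`R x` puts mass at most `2δ` on outputs whose density against a fixed `R x₀` exceeds
`K = 2 n e^ε`. The local randomizer keeps a sample of `R x` unless it is such an outlier or a coin
of bias `p = β / n` fires, and then resamples from `R x₀`. Its density against `R x₀` lies in
`[p, K + 1]`, which is pure `8 (ε + ln n)`-privacy for `n ≳ 1 / β`, and on every event it loses at
most `p + 2δ` of the mass of `R x`; by a hybrid argument the `n` users together lose at most
`n (p + 2δ) ≤ 3β`.
-/

open scoped ENNReal Classical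

noncomputable section

namespace ShuffledDP

universe u v w

lemma half_le_one : (2⁻¹ : ℝ≥0∞) ≤ 1 := by
  simp [ENNReal.inv_le_one]

/-- Independent samples from a finite family of PMFs, collected (in order) as a list. -/
noncomputable def indep {α : Type u} : (n : ℕ) → (Fin n → PMF α) → PMF (List α)
  | 0, _ => PMF.pure []
  | n + 1, f =>
      (f 0).bind fun y => (indep n fun i => f i.succ).bind fun ys => PMF.pure (y :: ys)

/-- `(ε, δ)`-differential privacy of a mechanism `M` with respect to a
neighboring relation `nbr` on inputs. -/
def DPFor {I : Type u} {Z : Type v} (nbr : I → I → Prop) (M : I → PMF Z) (ε δ : ℝ) : Prop :=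
  ∀ x x', nbr x x' → ∀ T : Set Z,
    (M x).toOuterMeasure T ≤
      ENNReal.ofReal (Real.exp ε) * (M x').toOuterMeasure T + ENNReal.ofReal δ

/-- Two datasets are neighbors if they differ in at most one coordinate. -/
def Neighbor {n : ℕ} {X : Type u} (x x' : Fin n → X) : Prop :=
  ∃ j, ∀ i, i ≠ j → x i = x' i

/-- The randomized-response local randomizer `R_{n,λ}`: output the input bit with
probability `1 - λ/n` and a uniformly random bit with probability `λ/n`. -/
noncomputable def rr (n : ℕ) (lam : ℝ) (x : Bool) : PMF Bool :=
  (PMF.bernoulli (min (Real.toNNReal (lam / n)) 1) (min_le_right _ _)).bind fun b =>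
    if b then PMF.bernoulli 2⁻¹ (inv_le_one_of_one_le₀ one_le_two) else PMF.pure x

/-- Binomial distribution, valued in `ℕ`. -/
noncomputable def binom (p : ℝ≥0∞) (h : p ≤ 1) (m : ℕ) : PMF ℕ :=
  (PMF.binomial p.toNNReal (by simpa using ENNReal.toNNReal_mono ENNReal.one_ne_top h) m).map Fin.val

/-- Uniform distribution over the subsets of `Fin n` of size `s`. -/
noncomputable def uniformSubset (n s : ℕ) : PMF (Finset (Fin n)) :=
  if h : ((Finset.univ : Finset (Fin n)).powersetCard s).Nonempty then
    PMF.uniformOfFinset _ h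
  else PMF.pure ∅

/-- `∑_{i ∉ H} x_i` for a boolean dataset `x`. -/
def sumOutside {n : ℕ} (H : Finset (Fin n)) (x : Fin n → Bool) : ℕ :=
  ∑ i ∈ Hᶜ, (if x i then 1 else 0)

/-- The mechanism `C_H`: output `∑_{i ∉ H} x_i + B` with `B ~ Bin(|H|, 1/2)`. -/
noncomputable def CH (n : ℕ) (H : Finset (Fin n)) (x : Fin n → Bool) : PMF ℕ :=
  (binom 2⁻¹ half_le_one H.card).map fun B => sumOutside H x + B

/-- The mechanism `C_s`: sample `H` uniformly among size-`s` subsets, then run `C_H`. -/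
noncomputable def Cs (n s : ℕ) (x : Fin n → Bool) : PMF ℕ :=
  (uniformSubset n s).bind fun H => CH n H x

/-- The mechanism `C_λ`: sample `s ~ Bin(n, λ/n)`, then run `C_s`. -/
noncomputable def Cmech (n : ℕ) (lam : ℝ) (x : Fin n → Bool) : PMF ℕ :=
  (binom (min (ENNReal.ofReal (lam / n)) 1) (min_le_right _ _) n).bind fun s => Cs n s x

/-- The shuffled bit-sum mechanism `Π_{n,λ}`: the random multiset `{y_1, …, y_n}`
of the outputs `y_i ~ R_{n,λ}(x_i)`. -/
noncomputable def shuffleBit (n : ℕ) (lam : ℝ) (x : Fin n → Bool) : PMF (Multiset Bool) :=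
  (indep n fun i => rr n lam (x i)).map fun l => (l : Multiset Bool)

/-- The bit-sum protocol output `P_{n,λ}(x) = (n/(n-λ)) (∑ y_i - λ/2)`. -/
noncomputable def bitSumOutput (n : ℕ) (lam : ℝ) (x : Fin n → Bool) : PMF ℝ :=
  (indep n fun i => rr n lam (x i)).map fun l =>
    ((n : ℝ) / (n - lam)) * ((l.count true : ℝ) - lam / 2)

/-- The randomized-rounding encoder `E_r`. -/
noncomputable def encoder (r : ℕ) (x : ℝ) : PMF (Fin r → Bool) :=
  (PMF.bernoulli (min (Real.toNNReal (x * r - ⌈x * r⌉ + 1)) 1) (min_le_right _ _)).map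
    fun b i => if ((i : ℕ) : ℤ) + 1 < ⌈x * r⌉ then true
      else if ((i : ℕ) : ℤ) + 1 = ⌈x * r⌉ then b else false

/-- The real-sum shuffled mechanism `Π^ℝ_{n,λ,r}`: the random multiset of all `n·r`
bits `y_{i,j} ~ R_{n,λ}(b_{i,j})` where `(b_{i,1},…,b_{i,r}) = E_r(x_i)`. -/
noncomputable def realShuffle (n : ℕ) (lam : ℝ) (r : ℕ) (X : Fin n → ℝ) :
    PMF (Multiset Bool) :=
  (indep n fun i =>
      (encoder r (X i)).bind fun b =>
        (indep r fun j => rr n lam (b j)).map fun l => (l : Multiset Bool)).map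
    fun ms => ms.sum

/-- The real-sum protocol output `z = (1/r)(n/(n-λ)) (∑_{i,j} y_{i,j} - λ r/2)`. -/
noncomputable def realOutput (n : ℕ) (lam : ℝ) (r : ℕ) (X : Fin n → ℝ) : PMF ℝ :=
  (realShuffle n lam r X).map fun m =>
    (1 / (r : ℝ)) * ((n : ℝ) / (n - lam)) * ((m.count true : ℝ) - lam * r / 2)

/-- The shuffled mechanism associated with a randomizer producing a multiset of
messages: the union (multiset sum) of the `n` users' message multisets. -/
noncomputable def shuffM {𝒳 : Type u} {𝒴 : Type v} (n : ℕ) (R : 𝒳 → PMF (Multiset 𝒴))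
    (x : Fin n → 𝒳) : PMF (Multiset 𝒴) :=
  (indep n fun i => R (x i)).map fun l => l.sum

/-- The multiset of the `m` messages output by an `m`-message randomizer. -/
noncomputable def vecR {𝒳 : Type u} {𝒴 : Type v} {m : ℕ} (R : 𝒳 → PMF (Fin m → 𝒴)) :
    𝒳 → PMF (Multiset 𝒴) :=
  fun a => (R a).map fun v => ((List.ofFn v : List 𝒴) : Multiset 𝒴)

/-- The one-message shuffled mechanism `Π_R`: the random multiset `{R(x_1), …, R(x_n)}`. -/
noncomputable def shuffle1 {𝒳 : Type u} {𝒴 : Type v} (n : ℕ) (R : 𝒳 → PMF 𝒴)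
    (x : Fin n → 𝒳) : PMF (Multiset 𝒴) :=
  (indep n fun i => R (x i)).map fun l => (l : Multiset 𝒴)

/-- `(ε, δ)`-differential privacy of a local randomizer (any two inputs are neighbors). -/
def RandDP {𝒳 : Type u} {𝒴 : Type v} (R : 𝒳 → PMF 𝒴) (ε δ : ℝ) : Prop :=
  ∀ x x' : 𝒳, ∀ T : Set 𝒴,
    (R x).toOuterMeasure T ≤
      ENNReal.ofReal (Real.exp ε) * (R x').toOuterMeasure T + ENNReal.ofReal δ

/-- The output of the local protocol `(R, A)`. -/
noncomputable def localOut {𝒳 : Type u} {𝒴 : Type v} {𝒵 : Type w} (n : ℕ)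
    (R : 𝒳 → PMF 𝒴) (A : List 𝒴 → 𝒵) (X : Fin n → 𝒳) : PMF 𝒵 :=
  (indep n fun i => R (X i)).map A

/-- `(a, b)`-accuracy of a protocol `P` for a function `f` w.r.t. a distance `d`. -/
def AccFor {I : Type u} {𝒵 : Type w} (P : I → PMF 𝒵) (f : I → 𝒵) (d : 𝒵 → 𝒵 → ℝ)
    (a b : ℝ) : Prop :=
  ∀ X, ENNReal.ofReal (1 - b) ≤ (P X).toOuterMeasure {z | d z (f X) ≤ a}

end ShuffledDP

namespace PMF

variable {α : Type*}

theorem toOuterMeasure_apply_le_one (μ : PMF α) (s : Set α) : μ.toOuterMeasure s ≤ 1 :=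
  (μ.toOuterMeasure.mono (Set.subset_univ s)).trans_eq
    ((μ.toOuterMeasure_apply_eq_one_iff _).2 (Set.subset_univ _))

theorem toOuterMeasure_apply_univ (μ : PMF α) : μ.toOuterMeasure Set.univ = 1 :=
  (μ.toOuterMeasure_apply_eq_one_iff _).2 (Set.subset_univ _)

theorem mul_toOuterMeasure_apply_le_mul {μ ν : PMF α} {c d : ℝ≥0∞} {s : Set α}
    (h : ∀ a ∈ s, c * μ a ≤ d * ν a) : c * μ.toOuterMeasure s ≤ d * ν.toOuterMeasure s := by
  simp only [toOuterMeasure_apply, ← ENNReal.tsum_mul_left]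
  refine ENNReal.tsum_le_tsum fun a => ?_
  by_cases ha : a ∈ s <;> simp [ha, h a]

theorem tsum_tsub_le_of_toOuterMeasure_le_add {μ ν : PMF α} {η : ℝ≥0∞}
    (h : ∀ s, μ.toOuterMeasure s ≤ ν.toOuterMeasure s + η) : ∑' a, (μ a - ν a) ≤ η := by
  set B := {a | ν a < μ a}
  have hB : μ.toOuterMeasure B = ν.toOuterMeasure B + ∑' a, (μ a - ν a) := by
    simp only [toOuterMeasure_apply, ← ENNReal.tsum_add]
    refine tsum_congr fun a => ?_
    by_cases ha : ν a < μ a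
    · simp [B, ha, add_tsub_cancel_of_le ha.le]
    · simp [B, ha, tsub_eq_zero_of_le (not_lt.1 ha)]
  have hνB : ν.toOuterMeasure B ≠ ⊤ :=
    ne_top_of_le_ne_top ENNReal.one_ne_top (ν.toOuterMeasure_apply_le_one B)
  exact (ENNReal.add_le_add_iff_left hνB).1 (hB ▸ h B)

theorem tsum_mul_le_tsum_mul_add {μ ν : PMF α} {η : ℝ≥0∞}
    (h : ∀ s, μ.toOuterMeasure s ≤ ν.toOuterMeasure s + η) {g : α → ℝ≥0∞} (hg : ∀ a, g a ≤ 1) :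
    ∑' a, μ a * g a ≤ ∑' a, ν a * g a + η := by
  have hpt : ∀ a, μ a * g a ≤ ν a * g a + (μ a - ν a) := fun a =>
    calc μ a * g a ≤ (ν a + (μ a - ν a)) * g a := by gcongr; exact le_add_tsub
      _ ≤ ν a * g a + (μ a - ν a) * 1 := by rw [add_mul]; gcongr; exact hg a
      _ = ν a * g a + (μ a - ν a) := by rw [mul_one]
  calc ∑' a, μ a * g a ≤ ∑' a, (ν a * g a + (μ a - ν a)) := ENNReal.tsum_le_tsum hpt
    _ = ∑' a, ν a * g a + ∑' a, (μ a - ν a) := ENNReal.tsum_add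
    _ ≤ ∑' a, ν a * g a + η := by gcongr; exact tsum_tsub_le_of_toOuterMeasure_le_add h

theorem toOuterMeasure_setOf_two_mul_lt_le {μ ν : PMF α} {c δ : ℝ≥0∞} (hc : c ≠ ⊤)
    (h : ∀ s, μ.toOuterMeasure s ≤ c * ν.toOuterMeasure s + δ) :
    μ.toOuterMeasure {a | 2 * c * ν a < μ a} ≤ 2 * δ := by
  set B := {a | 2 * c * ν a < μ a}
  have hcB : c * ν.toOuterMeasure B ≠ ⊤ :=
    ENNReal.mul_ne_top hc
      (ne_top_of_le_ne_top ENNReal.one_ne_top (ν.toOuterMeasure_apply_le_one B))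
  have hB : 2 * c * ν.toOuterMeasure B ≤ 1 * μ.toOuterMeasure B :=
    mul_toOuterMeasure_apply_le_mul fun a ha => by rw [one_mul]; exact ha.le
  have hcδ : c * ν.toOuterMeasure B ≤ δ := by
    have := hB.trans_eq (one_mul _) |>.trans (h B)
    rw [mul_assoc, two_mul] at this
    exact (ENNReal.add_le_add_iff_left hcB).1 this
  calc μ.toOuterMeasure B ≤ c * ν.toOuterMeasure B + δ := h B
    _ ≤ 2 * δ := by rw [two_mul]; gcongr

def completeWith (w : α → ℝ≥0∞) (hw : ∑' a, w a ≤ 1) (ρ : PMF α) : PMF α :=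
  ⟨fun a => w a + (1 - ∑' a, w a) * ρ a, by
    rw [ENNReal.summable.hasSum_iff, ENNReal.tsum_add, ENNReal.tsum_mul_left, ρ.tsum_coe,
      mul_one, add_tsub_cancel_of_le hw]⟩

theorem completeWith_apply (w : α → ℝ≥0∞) (hw : ∑' a, w a ≤ 1) (ρ : PMF α) (a : α) :
    completeWith w hw ρ a = w a + (1 - ∑' a, w a) * ρ a :=
  rfl

end PMF

namespace ShuffledDP

universe u v w

theorem indep_succ_toOuterMeasure {α : Type*} {n : ℕ} (f : Fin (n + 1) → PMF α)
    (S : Set (List α)) :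
    (indep (n + 1) f).toOuterMeasure S
      = ∑' y, f 0 y * (indep n fun i => f i.succ).toOuterMeasure {l | y :: l ∈ S} := by
  rw [indep, PMF.toOuterMeasure_bind_apply]
  refine tsum_congr fun y => congrArg _ ?_
  rw [PMF.toOuterMeasure_bind_apply, PMF.toOuterMeasure_apply]
  refine tsum_congr fun l => ?_
  by_cases hl : y :: l ∈ S <;> simp [hl, PMF.toOuterMeasure_pure_apply]

theorem indep_toOuterMeasure_le_add {α : Type*} {η : ℝ≥0∞} :
    ∀ {n : ℕ} {f g : Fin n → PMF α},
      (∀ i s, (f i).toOuterMeasure s ≤ (g i).toOuterMeasure s + η) →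
      ∀ S, (indep n f).toOuterMeasure S ≤ (indep n g).toOuterMeasure S + n * η
  | 0, f, g, _, S => by simp [indep]
  | n + 1, f, g, h, S => by
    rw [indep_succ_toOuterMeasure, indep_succ_toOuterMeasure]
    set Q : α → ℝ≥0∞ := fun y => (indep n fun i => g i.succ).toOuterMeasure {l | y :: l ∈ S}
    have ih : ∀ y, (indep n fun i => f i.succ).toOuterMeasure {l | y :: l ∈ S}
        ≤ min (Q y + n * η) 1 := fun y =>
      le_min (indep_toOuterMeasure_le_add (fun i => h i.succ) _)
        (PMF.toOuterMeasure_apply_le_one _ _)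
    calc ∑' y, f 0 y * (indep n fun i => f i.succ).toOuterMeasure {l | y :: l ∈ S}
        ≤ ∑' y, f 0 y * min (Q y + n * η) 1 :=
          ENNReal.tsum_le_tsum fun y => by gcongr; exact ih y
      _ ≤ ∑' y, g 0 y * min (Q y + n * η) 1 + η :=
          PMF.tsum_mul_le_tsum_mul_add (h 0) fun y => min_le_right _ _
      _ ≤ ∑' y, (g 0 y * Q y + g 0 y * (n * η)) + η := by
          gcongr with y
          rw [← mul_add]
          exact mul_le_mul_right (min_le_left _ _) _
      _ = ∑' y, g 0 y * Q y + (n + 1 : ℕ) * η := by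
          rw [ENNReal.tsum_add, ENNReal.tsum_mul_right, PMF.tsum_coe, one_mul]
          push_cast
          ring

theorem indep_exists_mem_le {α : Type*} (T : Set α) {q : ℝ≥0∞} :
    ∀ {n : ℕ} {f : Fin n → PMF α}, (∀ i, (f i).toOuterMeasure T ≤ q) →
      (indep n f).toOuterMeasure {l | ∃ y ∈ l, y ∈ T} ≤ n * q
  | 0, f, _ => by simp [indep, PMF.toOuterMeasure_pure_apply]
  | n + 1, f, h => by
    rw [indep_succ_toOuterMeasure]
    have hy : ∀ y,
        (indep n fun i => f i.succ).toOuterMeasure {l | y :: l ∈ {l | ∃ z ∈ l, z ∈ T}}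
          ≤ T.indicator 1 y + n * q := by
      intro y
      by_cases hyT : y ∈ T
      · simpa [hyT] using le_add_right (PMF.toOuterMeasure_apply_le_one _ _)
      · simpa [hyT] using indep_exists_mem_le T fun i => h i.succ
    calc _ ≤ ∑' y, (T.indicator (f 0) y + f 0 y * (n * q)) :=
          ENNReal.tsum_le_tsum fun y => by
            grw [hy y, mul_add]
            by_cases hyT : y ∈ T <;> simp [hyT]
      _ ≤ q + n * q := by
          rw [ENNReal.tsum_add, ENNReal.tsum_mul_right, PMF.tsum_coe, one_mul,
            ← PMF.toOuterMeasure_apply]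
          gcongr
          exact h 0
      _ = (n + 1 : ℕ) * q := by push_cast; ring

theorem toOuterMeasure_le_indep_exists_mem {α : Type*} {n : ℕ} (f : Fin (n + 1) → PMF α)
    (T : Set α) :
    (f 0).toOuterMeasure T ≤ (indep (n + 1) f).toOuterMeasure {l | ∃ y ∈ l, y ∈ T} := by
  rw [indep_succ_toOuterMeasure, PMF.toOuterMeasure_apply]
  refine ENNReal.tsum_le_tsum fun y => ?_
  by_cases hy : y ∈ T
  · have : {l : List α | y :: l ∈ {l | ∃ y ∈ l, y ∈ T}} = Set.univ :=
      Set.eq_univ_of_forall fun l => ⟨y, List.mem_cons_self, hy⟩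
    simp only [hy, Set.indicator_of_mem, this, PMF.toOuterMeasure_apply_univ, mul_one, le_rfl]
  · simp [hy]

/-- The coercion in `shuffle1` elaborates as a monadic lift of the whole distribution followed
by `map id`. -/
theorem shuffle1_eq_map {𝒳 𝒴 : Type*} {n : ℕ} (R : 𝒳 → PMF 𝒴) (X : Fin n → 𝒳) :
    shuffle1 n R X = (indep n fun i => R (X i)).map fun l : List 𝒴 => (l : Multiset 𝒴) := by
  rw [shuffle1]
  exact PMF.map_id _

theorem shuffle1_map {𝒳 𝒴 𝒵 : Type*} {n : ℕ} (R : 𝒳 → PMF 𝒴) (A : Multiset 𝒴 → 𝒵)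
    (X : Fin n → 𝒳) : (shuffle1 n R X).map A = localOut n R (fun l => A l) X := by
  rw [shuffle1_eq_map, PMF.map_comp]
  rfl

theorem shuffle1_toOuterMeasure {𝒳 𝒴 : Type*} {n : ℕ} (R : 𝒳 → PMF 𝒴) (X : Fin n → 𝒳)
    (S : Set (Multiset 𝒴)) :
    (shuffle1 n R X).toOuterMeasure S
      = (indep n fun i => R (X i)).toOuterMeasure {l | (l : Multiset 𝒴) ∈ S} := by
  rw [shuffle1_eq_map, PMF.toOuterMeasure_map_apply]
  rfl

theorem toOuterMeasure_le_of_dpFor_shuffle1 {𝒳 𝒴 : Type*} {n : ℕ} (hn : 1 ≤ n)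
    {R : 𝒳 → PMF 𝒴} {ε δ : ℝ} (hDP : DPFor Neighbor (shuffle1 n R) ε δ) (x x' : 𝒳)
    (T : Set 𝒴) :
    (R x).toOuterMeasure T
      ≤ ENNReal.ofReal (Real.exp ε) * n * (R x').toOuterMeasure T + ENNReal.ofReal δ := by
  obtain ⟨m, rfl⟩ : ∃ m, n = m + 1 := Nat.exists_eq_add_of_le' hn
  set E : Set (Multiset 𝒴) := {s | ∃ y ∈ s, y ∈ T}
  have hE : ∀ X : Fin (m + 1) → 𝒳, (shuffle1 (m + 1) R X).toOuterMeasure E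
      = (indep (m + 1) fun i => R (X i)).toOuterMeasure {l | ∃ y ∈ l, y ∈ T} := fun X => by
    rw [shuffle1_toOuterMeasure]
    rfl
  have hnbr : Neighbor (fun i : Fin (m + 1) => if i = 0 then x else x') fun _ => x' :=
    ⟨0, fun i hi => if_neg hi⟩
  calc (R x).toOuterMeasure T
      ≤ (shuffle1 (m + 1) R fun i => if i = 0 then x else x').toOuterMeasure E := by
        rw [hE]
        simpa using toOuterMeasure_le_indep_exists_mem (fun i => R (if i = 0 then x else x')) T
    _ ≤ ENNReal.ofReal (Real.exp ε) * (shuffle1 (m + 1) R fun _ => x').toOuterMeasure E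
        + ENNReal.ofReal δ := hDP _ _ hnbr E
    _ ≤ ENNReal.ofReal (Real.exp ε) * ((m + 1 : ℕ) * (R x').toOuterMeasure T)
        + ENNReal.ofReal δ := by
        rw [hE]
        gcongr
        exact indep_exists_mem_le T fun _ => le_rfl
    _ = _ := by rw [mul_assoc]

theorem half_le_exp_of_dpFor {I Z : Type*} {nbr : I → I → Prop} {M : I → PMF Z} {ε δ : ℝ}
    (hDP : DPFor nbr M ε δ) {x : I} (hx : nbr x x) (hδ : δ ≤ 1 / 2) : 1 / 2 ≤ Real.exp ε := by
  have h := hDP x x hx Set.univ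
  rw [PMF.toOuterMeasure_apply_univ, mul_one] at h
  have : (1 : ℝ≥0∞) ≤ ENNReal.ofReal (Real.exp ε + 1 / 2) := by
    rw [ENNReal.ofReal_add (Real.exp_pos ε).le (by norm_num)]
    exact h.trans (by gcongr)
  rw [ENNReal.one_le_ofReal] at this
  linarith

section Localize

variable {𝒳 𝒴 : Type*} (R : 𝒳 → PMF 𝒴) (x₀ : 𝒳) (K p : ℝ≥0∞)

def localize (x : 𝒳) : PMF 𝒴 :=
  PMF.completeWith (fun y => if R x y ≤ K * R x₀ y then (1 - p) * R x y else 0)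
    (le_of_le_of_eq (ENNReal.tsum_le_tsum fun y => by
        split_ifs
        exacts [mul_le_of_le_one_left' tsub_le_self, zero_le])
      (R x).tsum_coe)
    (R x₀)

theorem localize_apply_le (x : 𝒳) (y : 𝒴) : localize R x₀ K p x y ≤ (K + 1) * R x₀ y := by
  rw [localize, PMF.completeWith_apply, add_mul, one_mul]
  gcongr
  · split_ifs with h
    exacts [(mul_le_of_le_one_left' tsub_le_self).trans h, zero_le]
  · exact mul_le_of_le_one_left' tsub_le_self

theorem mul_le_localize_apply (hp : p ≤ 1) (x : 𝒳) (y : 𝒴) :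
    p * R x₀ y ≤ localize R x₀ K p x y := by
  rw [localize, PMF.completeWith_apply]
  refine le_add_left ?_
  gcongr
  calc p = 1 - (1 - p) := (ENNReal.sub_sub_cancel ENNReal.one_ne_top hp).symm
    _ ≤ 1 - ∑' y, if R x y ≤ K * R x₀ y then (1 - p) * R x y else 0 := by
        gcongr
        calc _ ≤ ∑' y, (1 - p) * R x y := ENNReal.tsum_le_tsum fun y => by
                split_ifs <;> simp
          _ = 1 - p := by rw [ENNReal.tsum_mul_left, (R x).tsum_coe, mul_one]

theorem randDP_localize {ε : ℝ} (hp : p ≤ 1) (h : K + 1 ≤ ENNReal.ofReal (Real.exp ε) * p) :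
    RandDP (localize R x₀ K p) ε 0 := fun x x' T => by
  rw [ENNReal.ofReal_zero, add_zero, ← one_mul ((localize R x₀ K p x).toOuterMeasure T)]
  refine PMF.mul_toOuterMeasure_apply_le_mul fun y _ => ?_
  calc 1 * localize R x₀ K p x y ≤ (K + 1) * R x₀ y := by
        rw [one_mul]; exact localize_apply_le R x₀ K p x y
    _ ≤ ENNReal.ofReal (Real.exp ε) * (p * R x₀ y) := by rw [← mul_assoc]; gcongr
    _ ≤ ENNReal.ofReal (Real.exp ε) * localize R x₀ K p x' y := by
        gcongr; exact mul_le_localize_apply R x₀ K p hp x' y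

theorem toOuterMeasure_le_localize_add (x : 𝒳) (T : Set 𝒴) :
    (R x).toOuterMeasure T ≤ (localize R x₀ K p x).toOuterMeasure T
      + (p + (R x).toOuterMeasure {y | K * R x₀ y < R x y}) := by
  have hpt : ∀ y, T.indicator (R x) y ≤ T.indicator (localize R x₀ K p x) y
      + (p * R x y + {y | K * R x₀ y < R x y}.indicator (R x) y) := fun y => by
    by_cases hT : y ∈ T
    · by_cases hy : R x y ≤ K * R x₀ y
      · simp only [Set.indicator_of_mem hT, localize, PMF.completeWith_apply, if_pos hy]
        calc R x y ≤ (1 - p) * R x y + p * R x y := by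
              rw [← add_mul]; exact le_mul_of_one_le_left' le_tsub_add
          _ ≤ _ := by gcongr <;> exact le_self_add
      · rw [Set.indicator_of_mem hT,
          Set.indicator_of_mem (show y ∈ {y | K * R x₀ y < R x y} from not_le.1 hy)]
        exact le_add_left le_add_self
    · simp [hT]
  simp only [PMF.toOuterMeasure_apply]
  calc _ ≤ _ := ENNReal.tsum_le_tsum hpt
    _ = _ := by
        rw [ENNReal.tsum_add, ENNReal.tsum_add, ENNReal.tsum_mul_left, (R x).tsum_coe, mul_one]

end Localize

theorem AccFor.of_toOuterMeasure_le_add {I 𝒵 : Type*} {P Q : I → PMF 𝒵} {f : I → 𝒵}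
    {d : 𝒵 → 𝒵 → ℝ} {a b η : ℝ} (h : AccFor P f d a b) (hη : 0 ≤ η)
    (hPQ : ∀ X s, (P X).toOuterMeasure s ≤ (Q X).toOuterMeasure s + ENNReal.ofReal η) :
    AccFor Q f d a (b + η) := fun X => by
  rw [← sub_sub, ENNReal.ofReal_sub _ hη, tsub_le_iff_right]
  exact (h X).trans (hPQ X _)

theorem le_natCast_of_le_mul {n : ℕ} {β c : ℝ} (hβ : β ≤ 1) (h : c ≤ n * β) : c ≤ n := by
  nlinarith [n.cast_nonneg (α := ℝ)]

theorem zpow_neg_eight_le_half {x : ℝ} (hx : 2 ≤ x) : x ^ (-8 : ℤ) ≤ 1 / 2 := by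
  rw [zpow_neg, zpow_ofNat]
  refine inv_le_of_inv_le₀ (by norm_num) ?_
  norm_num
  linarith [le_self_pow₀ (by linarith : 1 ≤ x) (by norm_num : 8 ≠ 0)]

theorem two_mul_add_one_le_exp_mul {n : ℕ} {β ε : ℝ} (hβ : β < 1) (hnβ : 2048 ≤ n * β)
    (hε : ε ≤ 1) (hε' : 1 / 2 ≤ Real.exp ε) :
    2 * (ENNReal.ofReal (Real.exp ε) * n) + 1
      ≤ ENNReal.ofReal (Real.exp (8 * (ε + Real.log n))) * ENNReal.ofReal (β / n) := by
  set E := Real.exp ε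
  have hn := le_natCast_of_le_mul hβ.le hnβ
  have hE3 : E ≤ 3 := (Real.exp_le_exp.2 hε).trans (by linarith [Real.exp_one_lt_d9])
  have hexp : Real.exp (8 * (ε + Real.log n)) = E ^ 8 * (n : ℝ) ^ 8 := by
    rw [mul_add, Real.exp_add, ← Nat.cast_ofNat, Real.exp_nat_mul, Real.exp_nat_mul,
      Real.exp_log (by linarith)]
  have hE8 : (1 / 2) ^ 8 ≤ E ^ 8 := pow_le_pow_left₀ (by norm_num) hε' 8
  have hn6 : (n : ℝ) ≤ (n : ℝ) ^ 6 := le_self_pow₀ (by linarith) (by norm_num)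
  have hreal : 2 * (E * n) + 1 ≤ E ^ 8 * (n : ℝ) ^ 8 * (β / n) :=
    calc 2 * (E * n) + 1 ≤ 8 * (n : ℝ) := by nlinarith
      _ ≤ (1 / 2) ^ 8 * (n : ℝ) ^ 6 * (n * β) := by nlinarith
      _ ≤ E ^ 8 * (n : ℝ) ^ 6 * (n * β) := by gcongr
      _ = E ^ 8 * (n : ℝ) ^ 8 * (β / n) := by field_simp
  rw [hexp, ← ENNReal.ofReal_natCast, ← ENNReal.ofReal_mul (Real.exp_pos ε).le,
    ← ENNReal.ofReal_ofNat 2, ← ENNReal.ofReal_mul (by norm_num), ← ENNReal.ofReal_one,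
    ← ENNReal.ofReal_add (by positivity) (by norm_num), ← ENNReal.ofReal_mul (by positivity)]
  exact ENNReal.ofReal_le_ofReal hreal

theorem natCast_mul_add_two_mul_le {n : ℕ} {β δ : ℝ} (hβ : β < 1) (hnβ : 2048 ≤ n * β)
    (hδ : δ < (n : ℝ) ^ (-8 : ℤ)) :
    (n : ℝ≥0∞) * (ENNReal.ofReal (β / n) + 2 * ENNReal.ofReal δ) ≤ ENNReal.ofReal (3 * β) := by
  have hn := le_natCast_of_le_mul hβ.le hnβ
  have hδ' : δ ≤ ((n : ℝ) ^ 8)⁻¹ := by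
    rw [zpow_neg, zpow_ofNat] at hδ
    exact hδ.le
  have hn7 : (n : ℝ) ≤ (n : ℝ) ^ 7 := le_self_pow₀ (by linarith) (by norm_num)
  have hnδ : n * δ ≤ β :=
    calc n * δ ≤ n * ((n : ℝ) ^ 8)⁻¹ := by gcongr
      _ ≤ β := by
        rw [← div_eq_mul_inv, div_le_iff₀ (by positivity)]
        nlinarith
  have hnβ' : (n : ℝ) * (β / n) = β := mul_div_cancel₀ β (by linarith)
  rw [← ENNReal.ofReal_natCast, mul_add, ← ENNReal.ofReal_mul (by positivity), hnβ',
    mul_left_comm, ← ENNReal.ofReal_mul (by positivity)]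
  calc ENNReal.ofReal β + 2 * ENNReal.ofReal (n * δ)
        ≤ ENNReal.ofReal β + 2 * ENNReal.ofReal β := by gcongr
    _ = ENNReal.ofReal (3 * β) := by
        have hβ0 : 0 ≤ β := by nlinarith
        rw [← ENNReal.ofReal_ofNat 2, ← ENNReal.ofReal_mul (by norm_num),
          ← ENNReal.ofReal_add hβ0 (by linarith)]
        ring_nf

/-- shuffled-to-local transformation: for every `β ∈ (0,1)` there
is `n₀` such that for all `n ≥ n₀`: any one-message shuffled protocol `(R, A)`
that is `(ε_S, δ_S)`-DP in the shuffled model with `ε_S ≤ 1`, `δ_S < n^{-8}`, and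
`(α,β)`-accurate for `f` w.r.t. `d`, yields a local protocol `(R', A')` that is
`(8(ε_S + ln n), 0)`-DP in the local model and `(α, 4β)`-accurate for `f`. -/
theorem stmt17 :
    ∀ beta : ℝ, beta ∈ Set.Ioo (0 : ℝ) 1 → ∃ n₀ : ℕ, ∀ n : ℕ, n₀ ≤ n →
      ∀ (𝒳 : Type u) (𝒴 : Type v) (𝒵 : Type w) (R : 𝒳 → PMF 𝒴)
        (A : Multiset 𝒴 → 𝒵) (f : (Fin n → 𝒳) → 𝒵) (d : 𝒵 → 𝒵 → ℝ)
        (epsS delS alpha : ℝ),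
        epsS ≤ 1 → delS < (n : ℝ) ^ (-8 : ℤ) →
        DPFor Neighbor (shuffle1 n R) epsS delS →
        AccFor (fun X : Fin n → 𝒳 => (shuffle1 n R X).map A) f d alpha beta →
        ∃ (R' : 𝒳 → PMF 𝒴) (A' : List 𝒴 → 𝒵),
          RandDP R' (8 * (epsS + Real.log n)) 0 ∧
          AccFor (localOut n R' A') f d alpha (4 * beta) := by
  rintro β ⟨hβ0, hβ1⟩
  refine ⟨⌈2048 / β⌉₊, fun n hn₀ 𝒳 𝒴 𝒵 R A f d ε δ α hε hδ hDP hAcc => ?_⟩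
  have hnβ : 2048 ≤ n * β := (div_le_iff₀ hβ0).1 ((Nat.le_ceil _).trans (by exact_mod_cast hn₀))
  have hn : (2048 : ℝ) ≤ n := le_natCast_of_le_mul hβ1.le hnβ
  have hn1 : 1 ≤ n := by exact_mod_cast (by linarith : (1 : ℝ) ≤ n)
  rcases isEmpty_or_nonempty 𝒳 with h𝒳 | ⟨⟨x₀⟩⟩
  · exact ⟨isEmptyElim, fun _ => A 0, fun x => isEmptyElim x, fun X => isEmptyElim (X ⟨0, hn1⟩)⟩
  have hε' : 1 / 2 ≤ Real.exp ε := half_le_exp_of_dpFor hDP (x := fun _ => x₀)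
    ⟨⟨0, hn1⟩, fun _ _ => rfl⟩ (hδ.le.trans (zpow_neg_eight_le_half (by linarith)))
  set c := ENNReal.ofReal (Real.exp ε) * n
  set p := ENNReal.ofReal (β / n)
  have hp : p ≤ 1 := ENNReal.ofReal_le_one.2 (div_le_one_of_le₀ (by nlinarith) n.cast_nonneg)
  have hbad : ∀ x, (R x).toOuterMeasure {y | 2 * c * R x₀ y < R x y} ≤ 2 * ENNReal.ofReal δ :=
    fun x => PMF.toOuterMeasure_setOf_two_mul_lt_le (by finiteness)
      (toOuterMeasure_le_of_dpFor_shuffle1 hn1 hDP x x₀)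
  refine ⟨localize R x₀ (2 * c) p, fun l => A l,
    randDP_localize R x₀ _ p hp (two_mul_add_one_le_exp_mul hβ1 hnβ hε hε'), ?_⟩
  rw [show 4 * β = β + 3 * β by ring]
  refine hAcc.of_toOuterMeasure_le_add (by positivity) fun X S => ?_
  rw [shuffle1_map, localOut, localOut, PMF.toOuterMeasure_map_apply,
    PMF.toOuterMeasure_map_apply]
  refine (indep_toOuterMeasure_le_add (η := p + 2 * ENNReal.ofReal δ) (fun i T =>
    (toOuterMeasure_le_localize_add R x₀ _ p (X i) T).trans (by grw [hbad])) _).trans ?_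
  grw [natCast_mul_add_two_mul_le hβ1 hnβ hδ]

end ShuffledDP
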